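/- A code that corrects e erasures and m substitutions whenever e + 2m ≤ t (e.g., any code with minimum Hamming distance at least t+1) combined with the Hagiwara marker construction and Algorithm 1 yields a code correcting any combination of t_d ≥ 1 deletions and t_i ≥ 1 insertions with t_d + t_i ≤ t: distinct Hagiwara codewords c ≠ c' never yield the same received word y under such composite errors whose Algorithm-1 outputs decode to the same codeword. -/

import Mathlib

/-- Deletion at a 1-indexed position set `J`. -/
def del {α : Type*} (x : List α) (J : Finset ℕ) : List α :=
  (((x.zipIdx 1).map Prod.swap).filter (fun p => decide (p.1 ∉ J))).map Prod.snd

/-- The marker `0^t 1^t`. -/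
def marker (t : ℕ) : List Bool :=
  List.replicate t false ++ List.replicate t true

/-- Hagiwara encoding: append the marker after each block and concatenate. -/
def hag (t : ℕ) (blocks : List (List Bool)) : List Bool :=
  (blocks.map (fun cb => cb ++ marker t)).flatten

/-!
Deleting from `y` the inserted positions of both error patterns leaves a common subsequence `w`
of `hag t bs` and `hag t bs'` that misses at most `t` symbols of each. Peel off the segments
`b ++ 0^t 1^t` from the left, following the suffixes of `w` embedded in the remaining tails:
when `b ≠ b'`, the shorter of the two suffixes cannot contain the segment `b' ++ 0^t 1^t` intact,
since with at most `t` symbols missing its prefix `b' ++ 0^t` would have to embed into `b ++ 0^t`,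
forcing `b' = b`. So every differing block costs a missing symbol, and at most `t` blocks differ.
-/

theorem del_sublist {α : Type*} (x : List α) (J : Finset ℕ) : (del x J).Sublist x := by
  have h := ((List.filter_sublist (p := fun p : ℕ × α => decide (p.1 ∉ J))).map Prod.snd :
    List.Sublist _ (((x.zipIdx 1).map Prod.swap).map Prod.snd))
  simpa [del, List.map_map, Function.comp_def, List.zipIdx_map_fst] using h

theorem del_sublist_del {α : Type*} (x : List α) {J J' : Finset ℕ} (h : J ⊆ J') :
    (del x J').Sublist (del x J) :=
  (List.monotone_filter_right _ fun p hp => by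
    simp only [decide_eq_true_eq] at hp ⊢; exact fun hJ => hp (h hJ)).map _

theorem length_le_length_del_add_card {α : Type*} (x : List α) (J : Finset ℕ) :
    x.length ≤ (del x J).length + J.card := by
  set l := (x.zipIdx 1).map Prod.swap
  set deleted := (l.filter fun p => !decide (p.1 ∉ J)).map Prod.fst
  have hsplit := List.length_eq_length_filter_add (l := l) (fun p => decide (p.1 ∉ J))
  have hnodup : deleted.Nodup := by
    refine ((List.filter_sublist).map Prod.fst).nodup ?_
    simpa [l, List.map_map, Function.comp_def] using List.nodup_range' (s := 1) (n := x.length)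
  have hsubset : deleted.toFinset ⊆ J := by
    intro i; simp [deleted]
  have hcard := Finset.card_le_card hsubset
  rw [List.toFinset_card_of_nodup hnodup, List.length_map] at hcard
  have hl : l.length = x.length := by simp [l]
  have hdel : (del x J).length = (l.filter fun p => decide (p.1 ∉ J)).length := List.length_map _
  omega

def blockDist {α : Type*} [DecidableEq α] (l l' : List α) : ℕ :=
  ((l.zip l').filter (fun p => decide (p.1 ≠ p.2))).length

@[simp] theorem blockDist_nil_left {α : Type*} [DecidableEq α] (l : List α) :
    blockDist [] l = 0 :=
  rfl

theorem blockDist_cons_cons {α : Type*} [DecidableEq α] (a a' : α) (l l' : List α) :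
    blockDist (a :: l) (a' :: l') = blockDist l l' + if a = a' then 0 else 1 := by
  by_cases h : a = a' <;> simp [blockDist, h]

namespace Hagiwara

theorem hag_cons (t : ℕ) (b : List Bool) (bs : List (List Bool)) :
    hag t (b :: bs) = b ++ marker t ++ hag t bs := by
  simp [hag]

theorem length_marker (t : ℕ) : (marker t).length = 2 * t := by
  simp [marker]; omega

theorem length_hag_eq {t : ℕ} {bs bs' : List (List Bool)}
    (h : List.Forall₂ (fun b b' => b.length = b'.length) bs bs') :
    (hag t bs).length = (hag t bs').length := by
  induction h with
  | nil => rfl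
  | cons hb _ ih => simp [hag_cons, hb, ih]

theorem sublist_of_append_zeros_sublist_append_marker {t : ℕ} (ht : 0 < t) {x x' : List Bool}
    (h : (x' ++ List.replicate t false).Sublist (x ++ marker t)) : x'.Sublist x := by
  have h' : (x' ++ List.replicate t false).Sublist
      ((x ++ List.replicate t false) ++ List.replicate t true) := by
    simpa [marker] using h
  obtain ⟨l, ones, heq, hl, hones⟩ := List.sublist_append_iff.mp h'
  obtain ⟨k, -, rfl⟩ := List.sublist_replicate_iff.mp hones
  have hk : k = 0 := by
    by_contra hk
    have := congrArg List.getLast? heq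
    simp [List.getLast?_append, List.getLast?_replicate, ht.ne', hk] at this
  subst hk
  rw [List.replicate_zero, List.append_nil] at heq
  exact (List.append_sublist_append_right _).mp (heq ▸ hl)

theorem eq_of_suffix_of_sublist_hag {t : ℕ} (ht : 0 < t) {b b' u w' : List Bool}
    {bs : List (List Bool)} (hlen : b'.length = b.length)
    (hsuf : b' ++ marker t ++ w' <:+ u) (hsub : u.Sublist (hag t (b :: bs)))
    (hbudget : (hag t bs).length ≤ w'.length + t) : b' = b := by
  obtain ⟨π, rfl⟩ := hsuf
  rw [hag_cons] at hsub
  obtain ⟨α, ω, hu, hα, hω⟩ := List.sublist_append_iff.mp hsub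
  have hprefix : π ++ b' ++ List.replicate t false <+: α := by
    refine List.prefix_of_prefix_length_le ⟨List.replicate t true ++ w', by simp [marker]⟩
      ⟨ω, hu.symm⟩ ?_
    have := congrArg List.length hu
    have := hω.length_le
    simp only [List.length_append, length_marker, List.length_replicate] at *
    omega
  have hsub' := sublist_of_append_zeros_sublist_append_marker ht (hprefix.sublist.trans hα)
  obtain rfl : π = [] := by
    simpa [hlen] using hsub'.length_le
  exact hsub'.eq_of_length hlen

theorem length_lt_of_suffix_of_ne {t : ℕ} (ht : 0 < t) {b b' u α' ω' : List Bool}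
    {bs : List (List Bool)} (hlen : b'.length = b.length) (hne : b' ≠ b)
    (hα' : α'.Sublist (b' ++ marker t)) (hsuf : α' ++ ω' <:+ u)
    (hsub : u.Sublist (hag t (b :: bs))) (hbudget : (hag t bs).length ≤ ω'.length + t) :
    α'.length < b'.length + 2 * t := by
  by_contra hkept
  have hα'l := hα'.length_le
  simp only [List.length_append, length_marker] at hα'l
  have hα'_eq : α' = b' ++ marker t :=
    hα'.eq_of_length (by simp only [List.length_append, length_marker]; omega)
  exact hne (eq_of_suffix_of_sublist_hag ht hlen (hα'_eq ▸ hsuf) hsub hbudget)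

theorem length_add_one_le_of_suffix_of_ne {t : ℕ} (ht : 0 < t) {b b' α ω α' ω' : List Bool}
    {bs bs' : List (List Bool)} (hlen : b'.length = b.length) (hne : b ≠ b')
    (hu : (α ++ ω).Sublist (hag t (b :: bs))) (hu' : (α' ++ ω').Sublist (hag t (b' :: bs')))
    (hα : α.Sublist (b ++ marker t)) (hα' : α'.Sublist (b' ++ marker t))
    (hsuf : α' ++ ω' <:+ α ++ ω) (hR : (hag t bs).length = (hag t bs').length)
    (hbudget : b.length + 2 * t + (hag t bs).length ≤ α'.length + ω'.length + t) :
    α'.length + ω'.length + 1 ≤ b.length + 2 * t + min ω.length ω'.length := by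
  have hαl := hα.length_le
  have hα'l := hα'.length_le
  simp only [List.length_append, length_marker] at hαl hα'l
  have hα'_lt := length_lt_of_suffix_of_ne ht hlen hne.symm hα' hsuf hu (by omega)
  have hα_lt : α'.length + ω'.length = α.length + ω.length → α.length < b.length + 2 * t :=
    fun heq => by
      have hsuf' : α ++ ω <:+ α' ++ ω' := by rw [hsuf.eq_of_length (by simpa using heq)]
      exact length_lt_of_suffix_of_ne ht hlen.symm hne hα hsuf' hu' (by omega)
  have hsuf_l := hsuf.length_le
  simp only [List.length_append] at hsuf_l
  omega

theorem blockDist_add_min_length_le {t : ℕ} (ht : 0 < t) {bs bs' : List (List Bool)}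
    (hblocks : List.Forall₂ (fun b b' => b.length = b'.length) bs bs') {u u' : List Bool}
    (hu : u.Sublist (hag t bs)) (hu' : u'.Sublist (hag t bs'))
    (hcomp : u' <:+ u ∨ u <:+ u')
    (hbudget : (hag t bs).length ≤ u.length + t)
    (hbudget' : (hag t bs').length ≤ u'.length + t) :
    blockDist bs bs' + min u.length u'.length ≤ (hag t bs).length := by
  induction hblocks generalizing u u' with
  | nil =>
    have := hu.length_le
    simp only [blockDist_nil_left, hag, List.map_nil, List.flatten_nil, List.length_nil] at *
    omega
  | @cons b b' bs bs' hb hrest ih =>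
    rw [hag_cons] at hu hu' hbudget hbudget' ⊢
    obtain ⟨α, ω, rfl, hα, hω⟩ := List.sublist_append_iff.mp hu
    obtain ⟨α', ω', rfl, hα', hω'⟩ := List.sublist_append_iff.mp hu'
    have htails : ω' <:+ ω ∨ ω <:+ ω' := by
      rcases hcomp with h | h
      · exact List.suffix_or_suffix_of_suffix ((List.suffix_append α' ω').trans h)
          (List.suffix_append α ω)
      · exact List.suffix_or_suffix_of_suffix ((List.suffix_append α ω).trans h)
          (List.suffix_append α' ω') |>.symm
    have hR := length_hag_eq (t := t) hrest
    have hαl := hα.length_le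
    have hα'l := hα'.length_le
    have hωl := hω.length_le
    have hω'l := hω'.length_le
    simp only [List.length_append, length_marker] at *
    have hih := ih hω hω' htails (by omega) (by omega)
    rw [blockDist_cons_cons]
    by_cases hbb : b = b'
    · simp only [hbb, if_true]
      omega
    · simp only [hbb, if_false]
      rcases hcomp with h | h
      · have := length_add_one_le_of_suffix_of_ne ht hb.symm hbb hu hu' hα hα' h hR (by omega)
        omega
      · have := length_add_one_le_of_suffix_of_ne ht hb (Ne.symm hbb) hu' hu hα' hα h hR.symm
          (by omega)
        omega

end Hagiwara

open Hagiwara in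
theorem stmt16 (N E t : ℕ) (C : Set (List (List Bool)))
    (hlen : ∀ bs ∈ C, bs.length = N ∧ ∀ cb ∈ bs, cb.length = E)
    -- `C` corrects `e` block-erasures and `m` block-substitutions whenever
    -- `e + 2m ≤ t`; e.g. its minimum block-Hamming distance exceeds `t`:
    (hdist : ∀ bs ∈ C, ∀ bs' ∈ C, bs ≠ bs' →
      t < ((List.zip bs bs').filter (fun p => decide (p.1 ≠ p.2))).length) :
    ∀ bs ∈ C, ∀ bs' ∈ C, bs ≠ bs' →
      ∀ (td ti td' ti' : ℕ) (J K J' K' : Finset ℕ),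
        1 ≤ td → 1 ≤ ti → td + ti ≤ t →
        1 ≤ td' → 1 ≤ ti' → td' + ti' ≤ t →
        J.card = td → K.card = ti → J'.card = td' → K'.card = ti' →
        ∀ y : List Bool,
          (y.length = (del (hag t bs) J).length + K.card ∧
            del y K = del (hag t bs) J) →
          (y.length = (del (hag t bs') J').length + K'.card ∧
            del y K' = del (hag t bs') J') →
          False := by
  intro bs hbs bs' hbs' hne td ti td' ti' J K J' K' htd _ hsum _ _ hsum' hJ hK hJ' hK' y
    ⟨hy, hyK⟩ ⟨hy', hyK'⟩
  obtain ⟨hN, hE⟩ := hlen bs hbs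
  obtain ⟨hN', hE'⟩ := hlen bs' hbs'
  have hblocks : List.Forall₂ (fun b b' => b.length = b'.length) bs bs' :=
    List.forall₂_iff_zip.mpr ⟨hN.trans hN'.symm, fun h =>
      (hE _ (List.of_mem_zip h).1).trans (hE' _ (List.of_mem_zip h).2).symm⟩
  have := length_le_length_del_add_card y (K ∪ K')
  set w := del y (K ∪ K')
  have hw : w.Sublist (hag t bs) :=
    (del_sublist_del y Finset.subset_union_left).trans (hyK ▸ del_sublist _ _)
  have hw' : w.Sublist (hag t bs') :=
    (del_sublist_del y Finset.subset_union_right).trans (hyK' ▸ del_sublist _ _)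
  have hn := length_hag_eq (t := t) hblocks
  have := Finset.card_union_le K K'
  have := length_le_length_del_add_card (hag t bs) J
  have := length_le_length_del_add_card (hag t bs') J'
  -- `w` misses at most `|J| + |K'|` symbols of `hag t bs` and `|J'| + |K|` of `hag t bs'`.
  have hbudget : (hag t bs).length ≤ w.length + t := by omega
  have hdist_le := blockDist_add_min_length_le (by omega) hblocks hw hw' (Or.inl List.suffix_rfl)
    hbudget (hn ▸ hbudget)
  have := hdist bs hbs bs' hbs' hne
  simp only [min_self, blockDist] at hdist_le
  omega
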